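/- arXiv:1702.02239 — 2 statements merged into one kernel-verified Lean document; each statement's English description precedes it below -/
import Mathlib

section
/- Let n_j : ℝ → E (j=1,…,N) be differentiable maps with derivatives ṅ_j such that {n_j(t)} is an orthonormal basis of E for every t, let θ_j : ℝ → ℝ be continuous, and fix an index k. Let Θ_k(t) = ∫₀ᵗ θ_k(ξ) dξ. Then the curve ψ(t) = e^{iΘ_k(t)} n_k(t) satisfies the Schrödinger equation i ψ'(t) = H_SA(t) ψ(t) for all t, with ψ(0) = n_k(0); i.e. the shortcut Hamiltonian drives the system exactly along the instantaneous eigenlevel k without transitions. -/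
/-! Orthonormality collapses `H_SA(t) n_k(t)` to `i (ṅ_k(t) + i θ_k(t) n_k(t))`, which is `i` times the
derivative of `n_k` corrected by the phase rate; by linearity the phase `e^{iΘ_k(t)}` passes through
`H_SA(t)`, and the product rule gives exactly this derivative for `ψ`. -/

/-- The rank-one operator `|u⟩⟨v| : z ↦ ⟪v, z⟫ • u`. -/
noncomputable def ketBra {E : Type*} [NormedAddCommGroup E] [InnerProductSpace ℂ E]
    (u v : E) : E →L[ℂ] E :=
  (innerSL ℂ v).smulRight u

/-- The shortcut (transitionless) Hamiltonian
`H_SA(t) = i Σ_j ( |ṅ_j(t)⟩⟨n_j(t)| + i θ_j(t) |n_j(t)⟩⟨n_j(t)| )`. -/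
noncomputable def HSA {E : Type*} [NormedAddCommGroup E] [InnerProductSpace ℂ E]
    {N : ℕ} (n n' : Fin N → ℝ → E) (θ : Fin N → ℝ → ℝ) (t : ℝ) : E →L[ℂ] E :=
  Complex.I • ∑ j : Fin N,
    (ketBra (n' j t) (n j t) + (Complex.I * (θ j t : ℂ)) • ketBra (n j t) (n j t))

section ketBra

variable {E : Type*} [NormedAddCommGroup E] [InnerProductSpace ℂ E]

@[simp]
theorem ketBra_apply (u v z : E) : ketBra u v z = inner ℂ v z • u := rfl

theorem ketBra_add_left (u w v : E) : ketBra (u + w) v = ketBra u v + ketBra w v := by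
  ext z; simp [smul_add]

theorem smul_ketBra (c : ℂ) (u v : E) : c • ketBra u v = ketBra (c • u) v := by
  ext z; simp [smul_comm c]

theorem Orthonormal.sum_ketBra_apply {ι : Type*} [Fintype ι] [DecidableEq ι] {v : ι → E}
    (hv : Orthonormal ℂ v) (a : ι → E) (k : ι) :
    (∑ j, ketBra (a j) (v j)) (v k) = a k := by
  simp [orthonormal_iff_ite.mp hv]

end ketBra

theorem HSA_apply_of_orthonormal {E : Type*} [NormedAddCommGroup E] [InnerProductSpace ℂ E]
    {N : ℕ} (n n' : Fin N → ℝ → E) (θ : Fin N → ℝ → ℝ) (t : ℝ)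
    (hON : Orthonormal ℂ (fun j : Fin N => n j t)) (k : Fin N) :
    HSA n n' θ t (n k t) = Complex.I • (n' k t + (Complex.I * (θ k t : ℂ)) • n k t) := by
  simp only [HSA, smul_ketBra, ← ketBra_add_left, smul_apply,
    hON.sum_ketBra_apply (fun j => n' j t + (Complex.I * (θ j t : ℂ)) • n j t)]

theorem HasDerivAt.cexp_I_mul_smul {E : Type*} [NormedAddCommGroup E] [NormedSpace ℂ E]
    {Θ : ℝ → ℝ} {θ : ℝ} {v : ℝ → E} {v' : E} {t : ℝ}
    (hΘ : HasDerivAt Θ θ t) (hv : HasDerivAt v v' t) :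
    HasDerivAt (fun s => Complex.exp (Complex.I * Θ s) • v s)
      (Complex.exp (Complex.I * Θ t) • (v' + (Complex.I * θ) • v t)) t := by
  have hphase := ((hΘ.ofReal_comp).const_mul Complex.I).cexp
  exact (hphase.smul hv).congr_deriv (by rw [smul_add, smul_smul])

theorem transitionless_tracking_of_eigenlevel_general
    {E : Type*} [NormedAddCommGroup E] [InnerProductSpace ℂ E]
    {N : ℕ} (n n' : Fin N → ℝ → E) (θ : Fin N → ℝ → ℝ)
    (hON : ∀ t : ℝ, Orthonormal ℂ (fun j : Fin N => n j t))
    (hn : ∀ (j : Fin N) (t : ℝ), HasDerivAt (n j) (n' j t) t)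
    (hθ : ∀ j : Fin N, Continuous (θ j))
    (k : Fin N) (ψ : ℝ → E)
    (hψ : ∀ t : ℝ,
      ψ t = Complex.exp (Complex.I * ((∫ ξ in (0:ℝ)..t, θ k ξ : ℝ) : ℂ)) • n k t) :
    ψ 0 = n k 0 ∧
      ∀ t : ℝ, ∃ d : E, HasDerivAt ψ d t ∧ Complex.I • d = HSA n n' θ t (ψ t) := by
  refine ⟨by simp [hψ], fun t => ?_⟩
  have hderiv := ((hθ k).integral_hasStrictDerivAt 0 t).hasDerivAt.cexp_I_mul_smul (hn k t)
  refine ⟨_, hderiv.congr_of_eventuallyEq (.of_forall hψ), ?_⟩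
  rw [hψ, map_smul, HSA_apply_of_orthonormal n n' θ t (hON t), smul_comm]

/-- The shortcut Hamiltonian drives the curve `ψ(t) = e^{iΘ_k(t)} n_k(t)`, with
`Θ_k(t) = ∫₀ᵗ θ_k(ξ) dξ`, exactly along the instantaneous eigenlevel `k`:
`i ψ'(t) = H_SA(t) ψ(t)` and `ψ(0) = n_k(0)`. -/
theorem transitionless_tracking_of_eigenlevel
    {E : Type*} [NormedAddCommGroup E] [InnerProductSpace ℂ E] [FiniteDimensional ℂ E]
    {N : ℕ} (n n' : Fin N → ℝ → E) (θ : Fin N → ℝ → ℝ)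
    (hON : ∀ t : ℝ, Orthonormal ℂ (fun j : Fin N => n j t))
    (hspan : ∀ t : ℝ, Submodule.span ℂ (Set.range (fun j : Fin N => n j t)) = ⊤)
    (hn : ∀ (j : Fin N) (t : ℝ), HasDerivAt (n j) (n' j t) t)
    (hθ : ∀ j : Fin N, Continuous (θ j))
    (k : Fin N) (ψ : ℝ → E)
    (hψ : ∀ t : ℝ,
      ψ t = Complex.exp (Complex.I * ((∫ ξ in (0:ℝ)..t, θ k ξ : ℝ) : ℂ)) • n k t) :
    ψ 0 = n k 0 ∧
      ∀ t : ℝ, ∃ d : E, HasDerivAt ψ d t ∧ Complex.I • d = HSA n n' θ t (ψ t) :=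
  transitionless_tracking_of_eigenlevel_general n n' θ hON hn hθ k ψ hψ
end

section
/- Let n_j : ℝ → E (j=1,…,N) be twice differentiable maps with derivatives ṅ_j such that {n_j(t)} is an orthonormal basis of E for every t, and let θ_j : ℝ → ℝ be differentiable. Then H_SA is differentiable and its matrix elements in the instantaneous basis satisfy, for all indices k, m and all t: ⟪n_k(t), H_SA'(t)(n_m(t))⟫ = i (d/dt)[⟪n_k(t), ṅ_m(t)⟫] − ( θ_k'(t) δ_{km} + (θ_m(t) − θ_k(t)) ⟪n_k(t), ṅ_m(t)⟫ ), where δ_{km} is the Kronecker delta. -/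
/-!
With `x_j = ṅ_j + i θ_j n_j` the Hamiltonian is `H_SA = i Σ_j |x_j⟩⟨n_j|`, so the product rule gives
`H_SA' = i Σ_j (|ẋ_j⟩⟨n_j| + |x_j⟩⟨ṅ_j|)`. In the instantaneous orthonormal basis the first sum has
matrix element `⟪n_k, ẋ_m⟫`. Differentiating `⟪n_a, n_b⟫ = δ_ab` gives `⟪ṅ_a, n_b⟫ = -⟪n_a, ṅ_b⟫`, and
with Parseval this turns the second sum into `⟪ṅ_k, ṅ_m⟫ - i θ_k ⟪n_k, ṅ_m⟫`. Finally
`⟪n_k, n̈_m⟫ + ⟪ṅ_k, ṅ_m⟫` is the derivative of `⟪n_k, ṅ_m⟫`.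
-/

open InnerProductSpace

section RankOne

variable {𝕜 E F : Type*} [RCLike 𝕜] [NormedAddCommGroup E] [NormedSpace 𝕜 E]
  [NormedAddCommGroup F] [InnerProductSpace 𝕜 F]

theorem inner_sum_rankOne_apply {ι G : Type*} [NormedAddCommGroup G] [InnerProductSpace 𝕜 G]
    (s : Finset ι) (a : G) (w : F) (x : ι → G) (y : ι → F) :
    inner 𝕜 a ((∑ j ∈ s, rankOne 𝕜 (x j) (y j)) w)
      = ∑ j ∈ s, inner 𝕜 a (x j) * inner 𝕜 (y j) w := by
  simp only [sum_apply, inner_sum, inner_right_rankOne_apply]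

theorem Orthonormal.sum_rankOne_apply {ι : Type*} [Fintype ι] {v : ι → F}
    (hv : Orthonormal 𝕜 v) (x : ι → E) (m : ι) :
    (∑ j, rankOne 𝕜 (x j) (v j)) (v m) = x m := by
  classical
  simp [orthonormal_iff_ite.mp hv]

variable [NormedSpace ℝ E] [IsScalarTower ℝ 𝕜 E] [NormedSpace ℝ F] [IsScalarTower ℝ 𝕜 F]

theorem isBoundedBilinearMap_rankOne :
    IsBoundedBilinearMap ℝ fun p : E × F => rankOne 𝕜 p.1 p.2 where
  add_left x₁ x₂ y := by rw [map_add]; rfl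
  smul_left r x y := by
    ext z
    simp only [rankOne_apply, FunLike.coe_smul, Pi.smul_apply, smul_comm r]
  add_right x y₁ y₂ := map_add _ _ _
  smul_right r x y := by
    ext z
    simp only [rankOne_apply, FunLike.coe_smul, Pi.smul_apply, ← algebraMap_smul 𝕜 r y,
      RCLike.algebraMap_eq_ofReal, inner_smul_real_left, smul_assoc]
  bound := ⟨1, one_pos, fun x y => by simp⟩

theorem HasDerivAt.rankOne {u : ℝ → E} {v : ℝ → F} {u' : E} {v' : F} {t : ℝ}
    (hu : HasDerivAt u u' t) (hv : HasDerivAt v v' t) :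
    HasDerivAt (fun s => rankOne 𝕜 (u s) (v s)) (rankOne 𝕜 u' (v t) + rankOne 𝕜 (u t) v') t := by
  rw [add_comm]
  exact (isBoundedBilinearMap_rankOne (𝕜 := 𝕜) (E := E) (F := F)).toContinuousLinearMap
    |>.hasDerivAt_of_bilinear (fun _ => hu) (fun _ => hv)

end RankOne

section MovingFrame

variable {𝕜 F ι : Type*} [RCLike 𝕜] [NormedAddCommGroup F] [InnerProductSpace 𝕜 F]

theorem inner_deriv_left_eq_neg_of_inner_const [NormedSpace ℝ F] {u v : ℝ → F} {u' v' : F}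
    {t : ℝ} {c : 𝕜} (hu : HasDerivAt u u' t) (hv : HasDerivAt v v' t)
    (hc : ∀ s, inner 𝕜 (u s) (v s) = c) :
    inner 𝕜 u' (v t) = -inner 𝕜 (u t) v' :=
  eq_neg_of_add_eq_zero_right <|
    (hu.inner 𝕜 hv).unique (by simpa only [hc] using hasDerivAt_const t c)

theorem inner_deriv_left_eq_neg_of_orthonormal [NormedSpace ℝ F] {n n' : ι → ℝ → F} {t : ℝ}
    (hON : ∀ s, Orthonormal 𝕜 fun j => n j s) (hn : ∀ j, HasDerivAt (n j) (n' j t) t)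
    (a b : ι) :
    inner 𝕜 (n' a t) (n b t) = -inner 𝕜 (n a t) (n' b t) := by
  classical
  exact inner_deriv_left_eq_neg_of_inner_const (hn a) (hn b)
    fun s => orthonormal_iff_ite.mp (hON s) a b

variable [Fintype ι]

theorem OrthonormalBasis.sum_inner_mul_inner_of_skew (b : OrthonormalBasis ι 𝕜 F)
    {v' : ι → F} (hskew : ∀ i j, inner 𝕜 (v' i) (b j) = -inner 𝕜 (b i) (v' j)) (k m : ι) :
    ∑ j, inner 𝕜 (b k) (v' j) * inner 𝕜 (v' j) (b m) = inner 𝕜 (v' k) (v' m) := by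
  rw [← b.sum_inner_mul_inner]
  refine Finset.sum_congr rfl fun j _ => ?_
  rw [hskew, ← neg_neg (inner 𝕜 (b k) (v' j)), ← hskew, neg_mul_neg]

theorem OrthonormalBasis.inner_sum_rankOne_apply_of_skew (b : OrthonormalBasis ι 𝕜 F)
    {v' : ι → F} (hskew : ∀ i j, inner 𝕜 (v' i) (b j) = -inner 𝕜 (b i) (v' j)) (c : ι → 𝕜)
    (k m : ι) :
    inner 𝕜 (b k) ((∑ j, rankOne 𝕜 (v' j + c j • b j) (v' j)) (b m))
      = inner 𝕜 (v' k) (v' m) - c k * inner 𝕜 (b k) (v' m) := by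
  classical
  simp only [inner_sum_rankOne_apply, inner_add_right, inner_smul_right, add_mul,
    Finset.sum_add_distrib, b.sum_inner_mul_inner_of_skew hskew,
    orthonormal_iff_ite.mp b.orthonormal, mul_ite, mul_one, mul_zero, ite_mul, zero_mul,
    Finset.sum_ite_eq, Finset.mem_univ, if_true]
  rw [hskew]
  ring

end MovingFrame

section ShortcutHamiltonian

open Complex

variable {E : Type*} [NormedAddCommGroup E] [InnerProductSpace ℂ E] {N : ℕ}

theorem ketBra_eq_rankOne (u v : E) : ketBra u v = rankOne ℂ u v := rfl

theorem HSA_eq_smul_sum_rankOne (n n' : Fin N → ℝ → E) (θ : Fin N → ℝ → ℝ) (t : ℝ) :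
    HSA n n' θ t = I • ∑ j, rankOne ℂ (n' j t + (I * θ j t) • n j t) (n j t) := by
  simp only [HSA, ketBra_eq_rankOne, map_add, map_smul, add_apply, smul_apply]

theorem hasDerivAt_HSA {n n' n'' : Fin N → ℝ → E} {θ θ' : Fin N → ℝ → ℝ} {t : ℝ}
    (hn : ∀ j, HasDerivAt (n j) (n' j t) t) (hn' : ∀ j, HasDerivAt (n' j) (n'' j t) t)
    (hθ : ∀ j, HasDerivAt (θ j) (θ' j t) t) :
    HasDerivAt (HSA n n' θ) (I • ∑ j,
      (rankOne ℂ (n'' j t + ((I * θ j t) • n' j t + (I * θ' j t) • n j t)) (n j t)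
        + rankOne ℂ (n' j t + (I * θ j t) • n j t) (n' j t))) t := by
  have hx : ∀ j, HasDerivAt (fun s => n' j s + (I * θ j s) • n j s)
      (n'' j t + ((I * θ j t) • n' j t + (I * θ' j t) • n j t)) t := fun j =>
    (hn' j).add ((((hθ j).ofReal_comp).const_mul I).smul (hn j))
  rw [funext (HSA_eq_smul_sum_rankOne n n' θ)]
  have hsum := HasDerivAt.fun_sum (u := Finset.univ) fun j _ => (hx j).rankOne (𝕜 := ℂ) (hn j)
  exact hsum.const_smul I

end ShortcutHamiltonian

theorem matrix_elements_of_deriv_shortcut_hamiltonian_general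
    {E : Type*} [NormedAddCommGroup E] [InnerProductSpace ℂ E]
    {N : ℕ} (n n' n'' : Fin N → ℝ → E) (θ θ' : Fin N → ℝ → ℝ)
    (hON : ∀ t : ℝ, Orthonormal ℂ (fun j : Fin N => n j t))
    (hspan : ∀ t : ℝ, Submodule.span ℂ (Set.range (fun j : Fin N => n j t)) = ⊤)
    (hn : ∀ (j : Fin N) (t : ℝ), HasDerivAt (n j) (n' j t) t)
    (hn' : ∀ (j : Fin N) (t : ℝ), HasDerivAt (n' j) (n'' j t) t)
    (hθ : ∀ (j : Fin N) (t : ℝ), HasDerivAt (θ j) (θ' j t) t) :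
    ∀ t : ℝ, ∃ D : E →L[ℂ] E, HasDerivAt (HSA n n' θ) D t ∧
      ∀ k m : Fin N,
        (inner ℂ (n k t) (D (n m t)) : ℂ)
          = Complex.I * deriv (fun s => (inner ℂ (n k s) (n' m s) : ℂ)) t
            - (((θ' k t : ℂ)) * (if k = m then 1 else 0)
              + ((θ m t : ℂ) - (θ k t : ℂ)) * (inner ℂ (n k t) (n' m t) : ℂ)) := by
  intro t
  obtain ⟨b, hb⟩ : ∃ b : OrthonormalBasis (Fin N) ℂ E, ⇑b = fun j => n j t :=
    ⟨.mk (hON t) (hspan t).ge, OrthonormalBasis.coe_mk _ _⟩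
  have hskew : ∀ i j, inner ℂ (n' i t) (b j) = -inner ℂ (b i) (n' j t) := by
    simpa only [hb] using inner_deriv_left_eq_neg_of_orthonormal hON (hn · t)
  refine ⟨_, hasDerivAt_HSA (hn · t) (hn' · t) (hθ · t), fun k m => ?_⟩
  have hframe := b.orthonormal.sum_rankOne_apply
    (fun j => n'' j t + ((Complex.I * θ j t) • n' j t + (Complex.I * θ' j t) • n j t)) m
  have hvelocity := b.inner_sum_rankOne_apply_of_skew hskew (fun j => Complex.I * θ j t) k m
  simp only [hb] at hframe hvelocity
  rw [((hn k t).inner ℂ (hn' m t)).deriv, smul_apply, inner_smul_right, Finset.sum_add_distrib,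
    add_apply, inner_add_right, hframe, hvelocity]
  simp only [inner_add_right, inner_smul_right, orthonormal_iff_ite.mp (hON t)]
  split_ifs with hkm
  · subst hkm
    linear_combination (θ' k t : ℂ) * Complex.I_mul_I
  · linear_combination (θ m t - θ k t : ℂ) * inner ℂ (n k t) (n' m t) * Complex.I_mul_I

/-- `H_SA` is differentiable and its matrix elements in the instantaneous basis satisfy
`⟪n_k, H_SA'(t) n_m⟫ = i d/dt[⟪n_k, ṅ_m⟫] − (θ_k'(t) δ_{km} + (θ_m(t) − θ_k(t)) ⟪n_k, ṅ_m⟫)`. -/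
theorem matrix_elements_of_deriv_shortcut_hamiltonian
    {E : Type*} [NormedAddCommGroup E] [InnerProductSpace ℂ E] [FiniteDimensional ℂ E]
    {N : ℕ} (n n' n'' : Fin N → ℝ → E) (θ θ' : Fin N → ℝ → ℝ)
    (hON : ∀ t : ℝ, Orthonormal ℂ (fun j : Fin N => n j t))
    (hspan : ∀ t : ℝ, Submodule.span ℂ (Set.range (fun j : Fin N => n j t)) = ⊤)
    (hn : ∀ (j : Fin N) (t : ℝ), HasDerivAt (n j) (n' j t) t)
    (hn' : ∀ (j : Fin N) (t : ℝ), HasDerivAt (n' j) (n'' j t) t)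
    (hθ : ∀ (j : Fin N) (t : ℝ), HasDerivAt (θ j) (θ' j t) t) :
    ∀ t : ℝ, ∃ D : E →L[ℂ] E, HasDerivAt (HSA n n' θ) D t ∧
      ∀ k m : Fin N,
        (inner ℂ (n k t) (D (n m t)) : ℂ)
          = Complex.I * deriv (fun s => (inner ℂ (n k s) (n' m s) : ℂ)) t
            - (((θ' k t : ℂ)) * (if k = m then 1 else 0)
              + ((θ m t : ℂ) - (θ k t : ℂ)) * (inner ℂ (n k t) (n' m t) : ℂ)) :=
  matrix_elements_of_deriv_shortcut_hamiltonian_general n n' n'' θ θ' hON hspan hn hn' hθ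
end
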